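/- Contraction property of the iterated optimal stopping operator: suppose F is concave, let c > 0, κ ∈ (0, c), and let w be the strict supersolution with parameter κ, i.e., min(F_i(w)_l, w^i_l − (M_i w)_l) = κ for all i ∈ I, l ∈ {1,…,N}. Let (u^m)_{m≥0} be the iterated optimal stopping sequence for switching cost c. If for some n ≥ 1 and some λ ∈ [0,1] one has u^n − u^{n−1} ≤ λ(w − u^{n−1}) componentwise, then u^{n+1} − u^n ≤ λ(1 − μ)(w − u^n) componentwise, where μ = min(1, γκ/(2‖F(0)‖ + κ)). -/

import Mathlib

open Filter Topology

noncomputable section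

/-- A monotone system with constant `γ`: whenever `u i l - v i l` is the (nonnegative)
maximum of all differences, `F u i l - F v i l ≥ γ (u i l - v i l)`. -/
def IsMonotoneSystem {N d : ℕ} (γ : ℝ)
    (F : (Fin d → Fin N → ℝ) → Fin d → Fin N → ℝ) : Prop :=
  ∀ u v : Fin d → Fin N → ℝ, ∀ i : Fin d, ∀ l : Fin N,
    (∀ (j : Fin d) (k : Fin N), u j k - v j k ≤ u i l - v i l) →
    0 ≤ u i l - v i l →
    γ * (u i l - v i l) ≤ F u i l - F v i l

/-- The intervention operator `(M_i u)_l = max_{j ≠ i} (u j l - c)`. -/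
def Mop {N d : ℕ} (c : ℝ) (u : Fin d → Fin N → ℝ) (i : Fin d) (l : Fin N) : ℝ :=
  ⨆ j : {j : Fin d // j ≠ i}, (u j l - c)

/-- The sup-norm `‖u‖ = max_{i,l} |u i l|`. -/
def supNorm {N d : ℕ} (u : Fin d → Fin N → ℝ) : ℝ :=
  ⨆ p : Fin d × Fin N, |u p.1 p.2|

/-- A penalty function: continuous, non-decreasing, vanishing on `(-∞,0]` and
positive on `(0,∞)`. -/
def IsPenaltyFunction (π : ℝ → ℝ) : Prop :=
  Continuous π ∧ Monotone π ∧ (∀ y : ℝ, y ≤ 0 → π y = 0) ∧ (∀ y : ℝ, 0 < y → 0 < π y)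

/-- A concave system: each `F_i` is concave (componentwise). -/
def IsConcaveSystem {N d : ℕ}
    (F : (Fin d → Fin N → ℝ) → Fin d → Fin N → ℝ) : Prop :=
  ∀ (i : Fin d) (u v : Fin d → Fin N → ℝ) (θ : ℝ), 0 ≤ θ → θ ≤ 1 → ∀ l : Fin N,
    θ * F u i l + (1 - θ) * F v i l ≤ F (fun j k => θ * u j k + (1 - θ) * v j k) i l

/-!
Put `ρ = λ (1 - μ)` and `v = ρ w + (1 - ρ) u^{n+1}`. By concavity `F(v) ≥ ρ F(w) ≥ 0`, and since `M`
is monotone and convex, the hypothesis on `u^{n+1} - u^n` gives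
`M u^{n+1} ≤ λ (w - κ) + (1 - λ) u^{n+1}`, which lies below `v` as soon as `μ (w - u^{n+1}) ≤ κ`.
That last bound follows from the a priori bounds `γ w ≤ κ + ‖F(0)‖` and `γ u^0 ≥ -‖F(0)‖`
(obtained at extremal points of `w` and `u^0`) together with `u^0 ≤ u^{n+1}`. So `v` is a
supersolution of the obstacle problem solved by `u^{n+2}`, and the comparison principle gives
`u^{n+2} ≤ v`.
-/

section

variable {N d : ℕ}

lemma supNorm_nonneg (u : Fin d → Fin N → ℝ) : 0 ≤ supNorm u :=
  Real.iSup_nonneg fun _ => abs_nonneg _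

lemma abs_le_supNorm (u : Fin d → Fin N → ℝ) (i : Fin d) (l : Fin N) : |u i l| ≤ supNorm u :=
  le_ciSup (f := fun p : Fin d × Fin N => |u p.1 p.2|) (Set.finite_range _).bddAbove (i, l)

lemma supNorm_neg (u : Fin d → Fin N → ℝ) : supNorm (-u) = supNorm u := by
  simp only [supNorm, Pi.neg_apply, abs_neg]

lemma sub_le_Mop {c : ℝ} (u : Fin d → Fin N → ℝ) {i j : Fin d} (hj : j ≠ i) (l : Fin N) :
    u j l - c ≤ Mop c u i l :=
  le_ciSup (f := fun j' : {j' : Fin d // j' ≠ i} => u j' l - c) (Set.finite_range _).bddAbove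
    ⟨j, hj⟩

lemma Mop_le (hd : 2 ≤ d) {c b : ℝ} {u : Fin d → Fin N → ℝ} {i : Fin d} {l : Fin N}
    (h : ∀ j, j ≠ i → u j l - c ≤ b) : Mop c u i l ≤ b := by
  have : Nonempty {j : Fin d // j ≠ i} := by
    obtain ⟨j, hj⟩ := Fintype.exists_ne_of_one_lt_card (by rw [Fintype.card_fin]; omega) i
    exact ⟨⟨j, hj⟩⟩
  exact ciSup_le fun j => h j j.2

lemma Mop_mono {c : ℝ} {u v : Fin d → Fin N → ℝ} (h : ∀ j k, u j k ≤ v j k) (i : Fin d)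
    (l : Fin N) : Mop c u i l ≤ Mop c v i l :=
  ciSup_mono (Set.finite_range _).bddAbove fun j => sub_le_sub_right (h j l) c

lemma Mop_convexComb_le (hd : 2 ≤ d) {c θ : ℝ} (hθ0 : 0 ≤ θ) (hθ1 : θ ≤ 1)
    (u v : Fin d → Fin N → ℝ) (i : Fin d) (l : Fin N) :
    Mop c (fun j k => θ * u j k + (1 - θ) * v j k) i l ≤
      θ * Mop c u i l + (1 - θ) * Mop c v i l :=
  Mop_le hd fun j hj => by
    nlinarith [mul_le_mul_of_nonneg_left (sub_le_Mop (c := c) u hj l) hθ0,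
      mul_le_mul_of_nonneg_left (sub_le_Mop (c := c) v hj l) (sub_nonneg.2 hθ1)]

lemma Mop_le_sub_of_forall_le (hd : 2 ≤ d) {c : ℝ} {u : Fin d → Fin N → ℝ} {i : Fin d}
    {l : Fin N} (h : ∀ j, u j l ≤ u i l) : Mop c u i l ≤ u i l - c :=
  Mop_le hd fun j _ => sub_le_sub_right (h j) c

end

namespace IsMonotoneSystem

variable {N d : ℕ} {γ : ℝ} {F : (Fin d → Fin N → ℝ) → Fin d → Fin N → ℝ}

lemma neg_comp_neg (hF : IsMonotoneSystem γ F) : IsMonotoneSystem γ fun u => -F (-u) := by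
  intro u v i l hmax hpos
  have := hF (-v) (-u) i l (fun j k => by simp only [Pi.neg_apply]; linarith [hmax j k])
    (by simp only [Pi.neg_apply]; linarith)
  simp only [Pi.neg_apply] at this ⊢
  linarith

lemma obstacle_comparison (hF : IsMonotoneSystem γ F) (hγ : 0 < γ)
    {ψ a b : Fin d → Fin N → ℝ} (ha : ∀ i l, min (F a i l) (a i l - ψ i l) ≤ 0)
    (hb : ∀ i l, 0 ≤ min (F b i l) (b i l - ψ i l)) (i : Fin d) (l : Fin N) :
    a i l ≤ b i l := by
  have : Nonempty (Fin d × Fin N) := ⟨(i, l)⟩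
  obtain ⟨⟨i₀, l₀⟩, hmax⟩ := Finite.exists_max fun p : Fin d × Fin N => a p.1 p.2 - b p.1 p.2
  by_contra! hlt
  have hpos : 0 < a i₀ l₀ - b i₀ l₀ := by linarith [hmax (i, l)]
  obtain ⟨hFb, hψb⟩ := le_min_iff.mp (hb i₀ l₀)
  rcases min_le_iff.mp (ha i₀ l₀) with hFa | hψa
  · have := hF a b i₀ l₀ (fun j k => hmax (j, k)) hpos.le
    nlinarith
  · linarith

lemma mul_le_add_supNorm (hF : IsMonotoneSystem γ F) (hγ : 0 ≤ γ) {u : Fin d → Fin N → ℝ}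
    {C : ℝ} (hC : 0 ≤ C) (hmax : ∀ i l, (∀ j k, u j k ≤ u i l) → F u i l ≤ C) (i : Fin d)
    (l : Fin N) : γ * u i l ≤ C + supNorm (F 0) := by
  have : Nonempty (Fin d × Fin N) := ⟨(i, l)⟩
  obtain ⟨⟨i₀, l₀⟩, hle⟩ := Finite.exists_max fun p : Fin d × Fin N => u p.1 p.2
  have hγu : γ * u i l ≤ γ * u i₀ l₀ := mul_le_mul_of_nonneg_left (hle (i, l)) hγ
  rcases le_or_gt (u i₀ l₀) 0 with hnonpos | hpos
  · nlinarith [supNorm_nonneg (F 0)]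
  · have := hF u 0 i₀ l₀ (fun j k => by simpa using hle (j, k)) (by simpa using hpos.le)
    have := hmax i₀ l₀ fun j k => hle (j, k)
    have := (abs_le.mp (abs_le_supNorm (F 0) i₀ l₀)).1
    simp only [Pi.zero_apply, sub_zero] at *
    linarith

lemma neg_supNorm_le_mul (hF : IsMonotoneSystem γ F) (hγ : 0 ≤ γ) {u : Fin d → Fin N → ℝ}
    (hu : ∀ i l, F u i l = 0) (i : Fin d) (l : Fin N) : -supNorm (F 0) ≤ γ * u i l := by
  have := hF.neg_comp_neg.mul_le_add_supNorm hγ le_rfl (fun i l _ => by simp [hu i l]) i l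
    (u := -u)
  simp only [Pi.neg_apply, neg_zero, supNorm_neg] at this
  linarith

/-- At a maximum point of `w` the switching constraint is slack (`c > κ`), so there `F w = κ`. -/
lemma mul_le_of_min_sub_Mop_eq (hF : IsMonotoneSystem γ F) (hd : 2 ≤ d) (hγ : 0 ≤ γ)
    {c κ : ℝ} (hκ0 : 0 < κ) (hκc : κ < c) {w : Fin d → Fin N → ℝ}
    (hw : ∀ i l, min (F w i l) (w i l - Mop c w i l) = κ) (i : Fin d) (l : Fin N) :
    γ * w i l ≤ κ + supNorm (F 0) :=
  hF.mul_le_add_supNorm hγ hκ0.le (fun i l hmax => by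
    have := Mop_le_sub_of_forall_le hd (c := c) fun j => hmax j l
    rcases min_eq_iff.mp (hw i l) with h | h <;> linarith) i l

lemma sub_le_of_obstacle_step (hF : IsMonotoneSystem γ F) (hFconc : IsConcaveSystem F)
    (hγ : 0 < γ) (hd : 2 ≤ d) {c κ lam μ : ℝ} (hκ0 : 0 ≤ κ) (hlam0 : 0 ≤ lam) (hlam1 : lam ≤ 1)
    (hμ0 : 0 ≤ μ) (hμ1 : μ ≤ 1) {w u u' u'' : Fin d → Fin N → ℝ}
    (hw : ∀ i l, κ ≤ min (F w i l) (w i l - Mop c w i l))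
    (hu' : ∀ i l, 0 ≤ min (F u' i l) (u' i l - Mop c u i l))
    (hu'' : ∀ i l, min (F u'' i l) (u'' i l - Mop c u' i l) ≤ 0)
    (hstep : ∀ i l, u' i l - u i l ≤ lam * (w i l - u i l))
    (hμ : ∀ i l, μ * (w i l - u' i l) ≤ κ) (i : Fin d) (l : Fin N) :
    u'' i l - u' i l ≤ lam * (1 - μ) * (w i l - u' i l) := by
  set ρ := lam * (1 - μ)
  have hρ0 : 0 ≤ ρ := mul_nonneg hlam0 (by linarith)
  have hρ1 : ρ ≤ 1 := mul_le_one₀ hlam1 (by linarith) (by linarith)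
  suffices u'' i l ≤ ρ * w i l + (1 - ρ) * u' i l by linarith
  refine hF.obstacle_comparison (b := fun j k => ρ * w j k + (1 - ρ) * u' j k) hγ hu''
    (fun i l => le_min ?_ ?_) i l
  · obtain ⟨hFw, -⟩ := le_min_iff.mp (hw i l)
    nlinarith [hFconc i w u' ρ hρ0 hρ1 l, mul_nonneg hρ0 (hκ0.trans hFw),
      mul_nonneg (sub_nonneg.2 hρ1) (le_min_iff.mp (hu' i l)).1]
  · refine sub_nonneg.2 ?_
    calc Mop c u' i l
        ≤ Mop c (fun j k => lam * w j k + (1 - lam) * u j k) i l :=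
          Mop_mono (fun j k => by linarith [hstep j k]) i l
      _ ≤ lam * Mop c w i l + (1 - lam) * Mop c u i l := Mop_convexComb_le hd hlam0 hlam1 _ _ i l
      _ ≤ lam * (w i l - κ) + (1 - lam) * u' i l := by
          gcongr <;> linarith [(le_min_iff.mp (hw i l)).2, (le_min_iff.mp (hu' i l)).2]
      _ ≤ ρ * w i l + (1 - ρ) * u' i l := by
          nlinarith [mul_le_mul_of_nonneg_left (hμ i l) hlam0]

end IsMonotoneSystem

lemma min_one_div_mul_le {a b κ x : ℝ} (ha : 0 ≤ a) (hb : 0 < b) (hκ : 0 ≤ κ)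
    (hx : a * x ≤ b) : min 1 (a * κ / b) * x ≤ κ := by
  have hμ : 0 ≤ min 1 (a * κ / b) := le_min zero_le_one (by positivity)
  rcases le_or_gt x 0 with hx0 | hx0
  · nlinarith
  · calc min 1 (a * κ / b) * x ≤ a * κ / b * x := by gcongr; exact min_le_right _ _
      _ = κ * (a * x) / b := by ring
      _ ≤ κ := div_le_of_le_mul₀ hb.le hκ (by nlinarith)

theorem iterated_optimal_stopping_contraction_general {N d : ℕ} (hd : 2 ≤ d)
    (γ : ℝ) (hγ : 0 < γ)
    (F : (Fin d → Fin N → ℝ) → Fin d → Fin N → ℝ)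
    (hFmono : IsMonotoneSystem γ F)
    (hFconc : IsConcaveSystem F)
    (c : ℝ) (κ : ℝ) (hκ0 : 0 < κ) (hκc : κ < c)
    (w : Fin d → Fin N → ℝ)
    (hw : ∀ i l, min (F w i l) (w i l - Mop c w i l) = κ)
    (U : ℕ → Fin d → Fin N → ℝ)
    (hU0 : ∀ i l, F (U 0) i l = 0)
    (hUn : ∀ m : ℕ, ∀ i l, min (F (U (m + 1)) i l) (U (m + 1) i l - Mop c (U m) i l) = 0)
    (n : ℕ) (lam : ℝ) (hlam0 : 0 ≤ lam) (hlam1 : lam ≤ 1)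
    (hstep : ∀ i l, U (n + 1) i l - U n i l ≤ lam * (w i l - U n i l)) :
    ∀ i l, U (n + 2) i l - U (n + 1) i l ≤
      lam * (1 - min 1 (γ * κ / (2 * supNorm (F 0) + κ))) * (w i l - U (n + 1) i l) := by
  have hK : 0 < 2 * supNorm (F 0) + κ := by linarith [supNorm_nonneg (F 0)]
  have hU0_le : ∀ i l, U 0 i l ≤ U (n + 1) i l :=
    hFmono.obstacle_comparison hγ (fun i l => (min_le_left _ _).trans (hU0 i l).le)
      fun i l => (hUn n i l).ge
  have hgap i l : γ * (w i l - U (n + 1) i l) ≤ 2 * supNorm (F 0) + κ := by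
    nlinarith [hFmono.mul_le_of_min_sub_Mop_eq hd hγ.le hκ0 hκc hw i l,
      hFmono.neg_supNorm_le_mul hγ.le hU0 i l, mul_le_mul_of_nonneg_left (hU0_le i l) hγ.le]
  exact hFmono.sub_le_of_obstacle_step hFconc hγ hd hκ0.le hlam0 hlam1
    (le_min zero_le_one (by positivity)) (min_le_left _ _) (fun i l => (hw i l).ge)
    (fun i l => (hUn n i l).ge) (fun i l => (hUn (n + 1) i l).le) hstep
    fun i l => min_one_div_mul_le hγ.le hK hκ0.le (hgap i l)

/-- Contraction property of the iterated optimal stopping operator. -/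
theorem iterated_optimal_stopping_contraction {N d : ℕ} (hN : 1 ≤ N) (hd : 2 ≤ d)
    (γ : ℝ) (hγ : 0 < γ)
    (F : (Fin d → Fin N → ℝ) → Fin d → Fin N → ℝ)
    (hFcont : Continuous F) (hFmono : IsMonotoneSystem γ F)
    (hFconc : IsConcaveSystem F)
    (c : ℝ) (hc : 0 < c) (κ : ℝ) (hκ0 : 0 < κ) (hκc : κ < c)
    (w : Fin d → Fin N → ℝ)
    (hw : ∀ i l, min (F w i l) (w i l - Mop c w i l) = κ)
    (U : ℕ → Fin d → Fin N → ℝ)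
    (hU0 : ∀ i l, F (U 0) i l = 0)
    (hUn : ∀ m : ℕ, ∀ i l, min (F (U (m + 1)) i l) (U (m + 1) i l - Mop c (U m) i l) = 0)
    (n : ℕ) (lam : ℝ) (hlam0 : 0 ≤ lam) (hlam1 : lam ≤ 1)
    (hstep : ∀ i l, U (n + 1) i l - U n i l ≤ lam * (w i l - U n i l)) :
    ∀ i l, U (n + 2) i l - U (n + 1) i l ≤
      lam * (1 - min 1 (γ * κ / (2 * supNorm (F 0) + κ))) * (w i l - U (n + 1) i l) :=
  iterated_optimal_stopping_contraction_general hd γ hγ F hFmono hFconc c κ hκ0 hκc w hw U hU0 hUn n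
    lam hlam0 hlam1 hstep
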